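/- arXiv:2602.23558 — 3 statements merged into one kernel-verified Lean document; each statement's English description precedes it below -/
import Mathlib

section
/- Let α, β : ℝ → ℝ^{n+1} be differentiable curves with α(t), β(t) ∈ Hⁿ for all t, which are unit-speed in the Minkowski sense: ⟨α'(t), α'(t)⟩ = 1 and ⟨β'(t), β'(t)⟩ = 1 for all t. Define γ(t) = 2𝒫(α(t))/(α₀(t) + β₀(t)) and δ(t) = 2𝒫(β(t))/(α₀(t) + β₀(t)), curves in ℝⁿ. Then ‖γ'(t)‖ = ‖δ'(t)‖ for all t, where ‖·‖ is the Euclidean norm; in particular γ and δ have the same length over any parameter interval. -/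
open scoped BigOperators

noncomputable section

/-- The Minkowski product on `ℝ^{n+1}`: `⟨x,y⟩ = -x₀y₀ + ∑_{i=1}^n xᵢyᵢ`. -/
def mink {n : ℕ} (x y : Fin (n + 1) → ℝ) : ℝ :=
  -(x 0 * y 0) + ∑ i : Fin n, x i.succ * y i.succ

/-- The vector `e = (1, 0, …, 0)` in `ℝ^{n+1}`. -/
def eVec (n : ℕ) : Fin (n + 1) → ℝ := fun i => if i = 0 then 1 else 0

/-- Projection `𝒫 : ℝ^{n+1} → ℝⁿ`, forgetting the 0-th coordinate, landing in
Euclidean space (with the Euclidean norm). -/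
def proj {n : ℕ} (x : Fin (n + 1) → ℝ) : EuclideanSpace ℝ (Fin n) :=
  WithLp.toLp 2 (fun i => x i.succ)

/-- The hyperboloid model `Hⁿ = {x : ⟨x,x⟩ = -1, x₀ > 0}`. -/
def Hyp (n : ℕ) : Set (Fin (n + 1) → ℝ) := {x | mink x x = -1 ∧ 0 < x 0}

/-- First component of the Pogorelov map: `P₁(x,y) = 2𝒫(x)/(-⟨x+y,e⟩)`. -/
def P1 {n : ℕ} (x y : Fin (n + 1) → ℝ) : EuclideanSpace ℝ (Fin n) :=
  (2 / (-(mink (x + y) (eVec n)))) • proj x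

/-- Second component of the Pogorelov map: `P₂(x,y) = 2𝒫(y)/(-⟨x+y,e⟩)`. -/
def P2 {n : ℕ} (x y : Fin (n + 1) → ℝ) : EuclideanSpace ℝ (Fin n) :=
  (2 / (-(mink (x + y) (eVec n)))) • proj y

/-- The function `f(a,b) = (2+‖a‖+‖b‖)(2-‖a‖+‖b‖)(2+‖a‖-‖b‖)(2-‖a‖-‖b‖)`. -/
def fQ {n : ℕ} (a b : EuclideanSpace ℝ (Fin n)) : ℝ :=
  (2 + ‖a‖ + ‖b‖) * (2 - ‖a‖ + ‖b‖) * (2 + ‖a‖ - ‖b‖) * (2 - ‖a‖ - ‖b‖)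

/-- The vector in `ℝ^{n+1}` with 0-th coordinate `t` and `𝒫`-projection `v`. -/
def liftVec {n : ℕ} (t : ℝ) (v : EuclideanSpace ℝ (Fin n)) : Fin (n + 1) → ℝ :=
  Fin.cons t (fun i => v i)

/-- First component of `Ψ(a,b)`, namely `(√(‖x̂‖²+1), x̂)` with `x̂ = 4a/√f(a,b)`. -/
def Psi1 {n : ℕ} (a b : EuclideanSpace ℝ (Fin n)) : Fin (n + 1) → ℝ :=
  liftVec (Real.sqrt (‖(4 / Real.sqrt (fQ a b)) • a‖ ^ 2 + 1)) ((4 / Real.sqrt (fQ a b)) • a)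

/-- Second component of `Ψ(a,b)`, namely `(√(‖ŷ‖²+1), ŷ)` with `ŷ = 4b/√f(a,b)`. -/
def Psi2 {n : ℕ} (a b : EuclideanSpace ℝ (Fin n)) : Fin (n + 1) → ℝ :=
  liftVec (Real.sqrt (‖(4 / Real.sqrt (fQ a b)) • b‖ ^ 2 + 1)) ((4 / Real.sqrt (fQ a b)) • b)

/-!
Put `c = 2 / (α₀ + β₀)`, `A = c • α` and `B = c • β`, so that `γ = 𝒫 ∘ A`, `δ = 𝒫 ∘ B`.
For any `z`, `‖𝒫 z‖² = ⟨z, z⟩ + z₀²`. Since `⟨α, α⟩ = -1` forces `⟨α, α'⟩ = 0`, the Minkowski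
square of `A' = c' α + c α'` is `c² - c'²`, and likewise for `B'`. Finally `A₀ + B₀ = 2` is
constant, so `A'₀ = -B'₀` and the two Euclidean speeds agree.
-/

section

variable {n : ℕ}

lemma mink_comm (x y : Fin (n + 1) → ℝ) : mink x y = mink y x := by
  simp only [mink, mul_comm]

lemma mink_add_smul_self (a b : ℝ) (x y : Fin (n + 1) → ℝ) :
    mink (a • x + b • y) (a • x + b • y)
      = a ^ 2 * mink x x + 2 * a * b * mink x y + b ^ 2 * mink y y := by
  have hsum : ∑ i : Fin n, (a * x i.succ + b * y i.succ) * (a * x i.succ + b * y i.succ)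
      = a ^ 2 * ∑ i : Fin n, x i.succ * x i.succ + 2 * a * b * ∑ i : Fin n, x i.succ * y i.succ
        + b ^ 2 * ∑ i : Fin n, y i.succ * y i.succ := by
    simp only [Finset.mul_sum, ← Finset.sum_add_distrib]
    exact Finset.sum_congr rfl fun i _ => by ring
  simp only [mink, Pi.add_apply, Pi.smul_apply, smul_eq_mul, hsum]
  ring

lemma norm_proj_sq (z : Fin (n + 1) → ℝ) : ‖proj z‖ ^ 2 = mink z z + z 0 ^ 2 := by
  simp only [EuclideanSpace.norm_sq_eq, proj, Real.norm_eq_abs, sq_abs, mink]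
  ring_nf

lemma HasDerivAt.mink {f g : ℝ → Fin (n + 1) → ℝ} {f' g' : Fin (n + 1) → ℝ} {t : ℝ}
    (hf : HasDerivAt f f' t) (hg : HasDerivAt g g' t) :
    HasDerivAt (fun s => mink (f s) (g s)) (mink f' (g t) + mink (f t) g') t := by
  have hfi := hasDerivAt_pi.1 hf
  have hgi := hasDerivAt_pi.1 hg
  have h : HasDerivAt (fun s => -(f s 0 * g s 0) + ∑ i : Fin n, f s i.succ * g s i.succ)
      (-(f' 0 * g t 0 + f t 0 * g' 0)
        + ∑ i : Fin n, (f' i.succ * g t i.succ + f t i.succ * g' i.succ)) t :=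
    ((hfi 0).mul (hgi 0)).neg.add (HasDerivAt.fun_sum fun i _ => (hfi i.succ).mul (hgi i.succ))
  refine h.congr_deriv ?_
  simp only [_root_.mink, Finset.sum_add_distrib]
  ring

lemma HasDerivAt.proj {f : ℝ → Fin (n + 1) → ℝ} {f' : Fin (n + 1) → ℝ} {t : ℝ}
    (hf : HasDerivAt f f' t) : HasDerivAt (fun s => proj (f s)) (proj f') t :=
  (EuclideanSpace.equiv (Fin n) ℝ).symm.toContinuousLinearMap.hasFDerivAt.comp_hasDerivAt t
    (hasDerivAt_pi.2 fun i => hasDerivAt_pi.1 hf i.succ)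

lemma mink_deriv_eq_zero_of_mink_self_const {f : ℝ → Fin (n + 1) → ℝ} {f' : Fin (n + 1) → ℝ}
    {t k : ℝ} (hf : HasDerivAt f f' t) (hk : ∀ s, mink (f s) (f s) = k) :
    mink (f t) f' = 0 := by
  have h := (hf.mink hf).unique ((hasDerivAt_const t k).congr_of_eventuallyEq
    (Filter.Eventually.of_forall hk))
  rw [mink_comm f'] at h
  linarith

lemma norm_deriv_smul_proj_sq {x : ℝ → Fin (n + 1) → ℝ} {c : ℝ → ℝ} {c' t : ℝ}
    (hc : HasDerivAt c c' t) (hx : DifferentiableAt ℝ x t)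
    (hH : ∀ s, mink (x s) (x s) = -1) (hu : mink (deriv x t) (deriv x t) = 1) :
    ‖deriv (fun s => c s • proj (x s)) t‖ ^ 2
      = c t ^ 2 - c' ^ 2 + (c' * x t 0 + c t * deriv x t 0) ^ 2 := by
  have hd : HasDerivAt (fun s => c s • proj (x s)) (proj (c t • deriv x t + c' • x t)) t :=
    (hc.smul hx.hasDerivAt).proj
  rw [hd.deriv, norm_proj_sq, add_comm (c t • _), mink_add_smul_self, hH t, hu,
    mink_deriv_eq_zero_of_mink_self_const hx.hasDerivAt hH]
  simp only [Pi.add_apply, Pi.smul_apply, smul_eq_mul]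
  ring

end

theorem statement_4_general {n : ℕ} (α β : ℝ → Fin (n + 1) → ℝ)
    (hαd : Differentiable ℝ α) (hβd : Differentiable ℝ β)
    (hαH : ∀ t, α t ∈ Hyp n) (hβH : ∀ t, β t ∈ Hyp n)
    (hαu : ∀ t, mink (deriv α t) (deriv α t) = 1)
    (hβu : ∀ t, mink (deriv β t) (deriv β t) = 1)
    (γ δ : ℝ → EuclideanSpace ℝ (Fin n))
    (hγ : ∀ t, γ t = (2 / (α t 0 + β t 0)) • proj (α t))
    (hδ : ∀ t, δ t = (2 / (α t 0 + β t 0)) • proj (β t)) :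
    ∀ t, ‖deriv γ t‖ = ‖deriv δ t‖ := by
  intro t
  set σ : ℝ → ℝ := fun s => α s 0 + β s 0
  set c : ℝ → ℝ := fun s => 2 / σ s
  have hσ_ne : ∀ s, σ s ≠ 0 := fun s => by linarith [(hαH s).2, (hβH s).2]
  have hσ : HasDerivAt σ (deriv α t 0 + deriv β t 0) t :=
    (hasDerivAt_pi.1 (hαd t).hasDerivAt 0).add (hasDerivAt_pi.1 (hβd t).hasDerivAt 0)
  have hc : HasDerivAt c (deriv c t) t :=
    ((differentiableAt_const 2).div hσ.differentiableAt (hσ_ne t)).hasDerivAt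
  have hcσ : deriv c t * σ t + c t * (deriv α t 0 + deriv β t 0) = 0 :=
    (hc.mul hσ).unique ((hasDerivAt_const t 2).congr_of_eventuallyEq
      (Filter.Eventually.of_forall fun s => div_mul_cancel₀ 2 (hσ_ne s)))
  rw [funext hγ, funext hδ, ← sq_eq_sq₀ (norm_nonneg _) (norm_nonneg _),
    norm_deriv_smul_proj_sq hc (hαd t) (fun s => (hαH s).1) (hαu t),
    norm_deriv_smul_proj_sq hc (hβd t) (fun s => (hβH s).1) (hβu t)]
  have hsum : deriv c t * α t 0 + c t * deriv α t 0
      = -(deriv c t * β t 0 + c t * deriv β t 0) := by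
    linear_combination hcσ
  rw [hsum, neg_sq]

/-- for a pair of differentiable unit-speed (in the Minkowski sense)
curves on the hyperboloid, the two image curves of the Pogorelov map have equal
Euclidean speeds. -/
theorem statement_4 {n : ℕ} (hn : 1 ≤ n) (α β : ℝ → Fin (n + 1) → ℝ)
    (hαd : Differentiable ℝ α) (hβd : Differentiable ℝ β)
    (hαH : ∀ t, α t ∈ Hyp n) (hβH : ∀ t, β t ∈ Hyp n)
    (hαu : ∀ t, mink (deriv α t) (deriv α t) = 1)
    (hβu : ∀ t, mink (deriv β t) (deriv β t) = 1)
    (γ δ : ℝ → EuclideanSpace ℝ (Fin n))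
    (hγ : ∀ t, γ t = (2 / (α t 0 + β t 0)) • proj (α t))
    (hδ : ∀ t, δ t = (2 / (α t 0 + β t 0)) • proj (β t)) :
    ∀ t, ‖deriv γ t‖ = ‖deriv δ t‖ :=
  statement_4_general α β hαd hβd hαH hβH hαu hβu γ δ hγ hδ
end
end

section
/- For all x, y ∈ Hⁿ, the pair (P₁(x,y), P₂(x,y)) lies in Ω and Ψ(P₁(x,y), P₂(x,y)) = (x, y); that is, Ψ ∘ Φ is the identity on Hⁿ × Hⁿ. -/
open scoped BigOperators

noncomputable section

/-! The heights `x₀, y₀` and the radii `α = ‖𝒫x‖, β = ‖𝒫y‖` satisfy `x₀² = 1 + α²`, `y₀² = 1 + β²`.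
With `s = x₀ + y₀` one has `Φ(x,y) = (2/s)(𝒫x, 𝒫y)`, and the two "Heron" factors of `f` factor as
`(s ± β)² - α² = 2s(y₀ ± β)`, so `f(Φ(x,y)) = (8/s)²`. Hence the rescaling `4/√f = s/2` in `Ψ` exactly
undoes the factor `2/s`, and `Ψ` recovers `𝒫x, 𝒫y`, hence `x, y` on the hyperboloid. -/

lemma heron_factor_eq {a b α β : ℝ} (ha : a ^ 2 = 1 + α ^ 2) (hb : b ^ 2 = 1 + β ^ 2) :
    (a + b + β) ^ 2 - α ^ 2 = 2 * (a + b) * (b + β) := by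
  linear_combination ha - hb

lemma heron_product_eq {a b α β : ℝ} (ha : a ^ 2 = 1 + α ^ 2) (hb : b ^ 2 = 1 + β ^ 2)
    (hs : a + b ≠ 0) :
    let u := 2 / (a + b) * α
    let v := 2 / (a + b) * β
    (2 + u + v) * (2 - u + v) * (2 + u - v) * (2 - u - v) = (8 / (a + b)) ^ 2 := by
  intro u v
  have hb' : b ^ 2 = 1 + (-β) ^ 2 := by rw [neg_sq]; exact hb
  have key : ((a + b + β) ^ 2 - α ^ 2) * ((a + b - β) ^ 2 - α ^ 2) = 4 * (a + b) ^ 2 := by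
    rw [sub_eq_add_neg (a + b) β, heron_factor_eq ha hb, heron_factor_eq ha hb']
    linear_combination 4 * (a + b) ^ 2 * hb
  simp only [u, v]
  field_simp
  linear_combination 16 * key

variable {n : ℕ} {x y : Fin (n + 1) → ℝ}

lemma norm_proj_sq_s6 (x : Fin (n + 1) → ℝ) :
    ‖proj x‖ ^ 2 = ∑ i : Fin n, x i.succ * x i.succ := by
  rw [EuclideanSpace.norm_eq, Real.sq_sqrt (by positivity)]
  refine Finset.sum_congr rfl fun i _ => ?_
  rw [Real.norm_eq_abs, sq_abs, sq]
  rfl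

lemma sq_eq_one_add_norm_proj_sq (hx : mink x x = -1) : x 0 ^ 2 = 1 + ‖proj x‖ ^ 2 := by
  rw [mink] at hx
  linear_combination -hx - norm_proj_sq_s6 x

lemma norm_proj_lt_of_mem_Hyp (hx : x ∈ Hyp n) : ‖proj x‖ < x 0 := by
  have h := sq_eq_one_add_norm_proj_sq hx.1
  nlinarith [hx.2, norm_nonneg (proj x)]

lemma liftVec_sqrt_norm_proj_sq_add_one (hx : x ∈ Hyp n) :
    liftVec (Real.sqrt (‖proj x‖ ^ 2 + 1)) (proj x) = x := by
  have hx0 : Real.sqrt (‖proj x‖ ^ 2 + 1) = x 0 := by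
    rw [add_comm, ← sq_eq_one_add_norm_proj_sq hx.1, Real.sqrt_sq hx.2.le]
  rw [hx0]
  funext i
  refine Fin.cases ?_ (fun j => ?_) i
  · simp [liftVec]
  · simp [liftVec, proj]

lemma neg_mink_add_eVec (x y : Fin (n + 1) → ℝ) : -mink (x + y) (eVec n) = x 0 + y 0 := by
  simp [mink, eVec, Fin.succ_ne_zero]

lemma P1_eq (x y : Fin (n + 1) → ℝ) : P1 x y = (2 / (x 0 + y 0)) • proj x := by
  rw [P1, neg_mink_add_eVec]

lemma P2_eq (x y : Fin (n + 1) → ℝ) : P2 x y = (2 / (x 0 + y 0)) • proj y := by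
  rw [P2, neg_mink_add_eVec]

section Hyperboloid

variable (hx : x ∈ Hyp n) (hy : y ∈ Hyp n)
include hx hy

lemma add_pos_of_mem_Hyp : 0 < x 0 + y 0 := add_pos hx.2 hy.2

lemma norm_P1_eq : ‖P1 x y‖ = 2 / (x 0 + y 0) * ‖proj x‖ := by
  rw [P1_eq, norm_smul, Real.norm_of_nonneg (div_pos two_pos (add_pos_of_mem_Hyp hx hy)).le]

lemma norm_P2_eq : ‖P2 x y‖ = 2 / (x 0 + y 0) * ‖proj y‖ := by
  rw [P2_eq, norm_smul, Real.norm_of_nonneg (div_pos two_pos (add_pos_of_mem_Hyp hx hy)).le]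

lemma norm_P1_add_norm_P2_lt_two : ‖P1 x y‖ + ‖P2 x y‖ < 2 := by
  have hs := add_pos_of_mem_Hyp hx hy
  rw [norm_P1_eq hx hy, norm_P2_eq hx hy, ← mul_add, div_mul_eq_mul_div, div_lt_iff₀ hs]
  linarith [norm_proj_lt_of_mem_Hyp hx, norm_proj_lt_of_mem_Hyp hy]

lemma fQ_P1_P2 : fQ (P1 x y) (P2 x y) = (8 / (x 0 + y 0)) ^ 2 := by
  rw [fQ, norm_P1_eq hx hy, norm_P2_eq hx hy]
  exact heron_product_eq (sq_eq_one_add_norm_proj_sq hx.1) (sq_eq_one_add_norm_proj_sq hy.1)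
    (add_pos_of_mem_Hyp hx hy).ne'

lemma four_div_sqrt_fQ_P1_P2 : 4 / Real.sqrt (fQ (P1 x y) (P2 x y)) = (x 0 + y 0) / 2 := by
  have hs := add_pos_of_mem_Hyp hx hy
  rw [fQ_P1_P2 hx hy, Real.sqrt_sq (by positivity)]
  field_simp
  ring

lemma four_div_sqrt_fQ_smul_P1 :
    (4 / Real.sqrt (fQ (P1 x y) (P2 x y))) • P1 x y = proj x := by
  have hs := add_pos_of_mem_Hyp hx hy
  have hone : (x 0 + y 0) / 2 * (2 / (x 0 + y 0)) = 1 := by field_simp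
  rw [four_div_sqrt_fQ_P1_P2 hx hy, P1_eq, smul_smul, hone, one_smul]

lemma four_div_sqrt_fQ_smul_P2 :
    (4 / Real.sqrt (fQ (P1 x y) (P2 x y))) • P2 x y = proj y := by
  have hs := add_pos_of_mem_Hyp hx hy
  have hone : (x 0 + y 0) / 2 * (2 / (x 0 + y 0)) = 1 := by field_simp
  rw [four_div_sqrt_fQ_P1_P2 hx hy, P2_eq, smul_smul, hone, one_smul]

end Hyperboloid

theorem statement_6_general {n : ℕ} (x y : Fin (n + 1) → ℝ)
    (hx : x ∈ Hyp n) (hy : y ∈ Hyp n) :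
    ‖P1 x y‖ + ‖P2 x y‖ < 2 ∧
    Psi1 (P1 x y) (P2 x y) = x ∧ Psi2 (P1 x y) (P2 x y) = y := by
  refine ⟨norm_P1_add_norm_P2_lt_two hx hy, ?_, ?_⟩
  · rw [Psi1, four_div_sqrt_fQ_smul_P1 hx hy, liftVec_sqrt_norm_proj_sq_add_one hx]
  · rw [Psi2, four_div_sqrt_fQ_smul_P2 hx hy, liftVec_sqrt_norm_proj_sq_add_one hy]

/-- `Φ(Hⁿ × Hⁿ) ⊆ Ω` and `Ψ ∘ Φ = id` on `Hⁿ × Hⁿ`. -/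
theorem statement_6 {n : ℕ} (hn : 1 ≤ n) (x y : Fin (n + 1) → ℝ)
    (hx : x ∈ Hyp n) (hy : y ∈ Hyp n) :
    ‖P1 x y‖ + ‖P2 x y‖ < 2 ∧
    Psi1 (P1 x y) (P2 x y) = x ∧ Psi2 (P1 x y) (P2 x y) = y :=
  statement_6_general x y hx hy
end
end

section
/- For every (a, b) ∈ Ω, both components of Ψ(a, b) lie in Hⁿ and Φ(Ψ(a, b)) = (a, b). Together with the identity Ψ ∘ Φ = id on Hⁿ × Hⁿ, this shows the Pogorelov map Φ restricted to Hⁿ × Hⁿ is a bijection onto Ω with inverse Ψ. -/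
open scoped BigOperators

noncomputable section

/-!
Writing `A = ‖a‖`, `B = ‖b‖`, the factors of `f` pair up as
`f = ((2+A)² - B²)((2-A)² - B²) = (4 + A² - B²)² - 16A²`.
Hence `‖x̂‖² + 1 = (4 + A² - B²)² / f`, so `Ψ` lands on the hyperboloid with time coordinates
`(4 + A² - B²)/√f` and `(4 + B² - A²)/√f`, which add up to `8/√f`.
Then `Φ` rescales `x̂ = 4a/√f` by `2/(8/√f)` and returns `a`.
-/

section Lift

variable {n : ℕ}

@[simp]
lemma liftVec_zero (t : ℝ) (v : EuclideanSpace ℝ (Fin n)) : liftVec t v 0 = t := rfl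

@[simp]
lemma proj_liftVec (t : ℝ) (v : EuclideanSpace ℝ (Fin n)) : proj (liftVec t v) = v := by
  ext i
  simp [proj, liftVec]

lemma mink_eVec (x : Fin (n + 1) → ℝ) : mink x (eVec n) = -x 0 := by
  simp [mink, eVec, Fin.succ_ne_zero]

lemma mink_liftVec_self (t : ℝ) (v : EuclideanSpace ℝ (Fin n)) :
    mink (liftVec t v) (liftVec t v) = -(t * t) + ‖v‖ ^ 2 := by
  rw [EuclideanSpace.norm_sq_eq]
  simp [mink, liftVec, sq]

lemma liftVec_sqrt_mem_Hyp (v : EuclideanSpace ℝ (Fin n)) :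
    liftVec (Real.sqrt (‖v‖ ^ 2 + 1)) v ∈ Hyp n := by
  refine ⟨?_, Real.sqrt_pos.mpr (by positivity)⟩
  rw [mink_liftVec_self, Real.mul_self_sqrt (by positivity)]
  ring

lemma P1_liftVec (s t : ℝ) (v w : EuclideanSpace ℝ (Fin n)) :
    P1 (liftVec s v) (liftVec t w) = (2 / (s + t)) • v := by
  simp [P1, mink_eVec]

lemma P2_liftVec (s t : ℝ) (v w : EuclideanSpace ℝ (Fin n)) :
    P2 (liftVec s v) (liftVec t w) = (2 / (s + t)) • w := by
  simp [P2, mink_eVec]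

end Lift

section Psi

variable {n : ℕ} {a b : EuclideanSpace ℝ (Fin n)}

lemma fQ_comm (a b : EuclideanSpace ℝ (Fin n)) : fQ a b = fQ b a := by
  unfold fQ
  ring

lemma fQ_add_sixteen_mul_norm_sq (a b : EuclideanSpace ℝ (Fin n)) :
    fQ a b + 16 * ‖a‖ ^ 2 = (4 + ‖a‖ ^ 2 - ‖b‖ ^ 2) ^ 2 := by
  unfold fQ
  ring

lemma fQ_pos (hab : ‖a‖ + ‖b‖ < 2) : 0 < fQ a b := by
  have := norm_nonneg a
  have := norm_nonneg b
  unfold fQ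
  apply mul_pos (mul_pos (mul_pos _ _) _) <;> linarith

lemma Psi2_eq_Psi1_swap (a b : EuclideanSpace ℝ (Fin n)) : Psi2 a b = Psi1 b a := by
  rw [Psi2, Psi1, fQ_comm]

lemma Psi1_eq_liftVec (hab : ‖a‖ + ‖b‖ < 2) :
    Psi1 a b = liftVec ((4 + ‖a‖ ^ 2 - ‖b‖ ^ 2) / Real.sqrt (fQ a b))
      ((4 / Real.sqrt (fQ a b)) • a) := by
  have hf := fQ_pos hab
  have hr : 0 < Real.sqrt (fQ a b) := Real.sqrt_pos.mpr hf
  have hnum : 0 < 4 + ‖a‖ ^ 2 - ‖b‖ ^ 2 := by nlinarith [norm_nonneg a, norm_nonneg b]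
  have hsq : ‖(4 / Real.sqrt (fQ a b)) • a‖ ^ 2 + 1
      = ((4 + ‖a‖ ^ 2 - ‖b‖ ^ 2) / Real.sqrt (fQ a b)) ^ 2 := by
    rw [norm_smul, Real.norm_of_nonneg (by positivity), div_pow, mul_pow, div_pow,
      Real.sq_sqrt hf.le, ← fQ_add_sixteen_mul_norm_sq]
    field_simp
    ring
  rw [Psi1, hsq, Real.sqrt_sq (by positivity)]

lemma Psi2_eq_liftVec (hab : ‖a‖ + ‖b‖ < 2) :
    Psi2 a b = liftVec ((4 + ‖b‖ ^ 2 - ‖a‖ ^ 2) / Real.sqrt (fQ a b))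
      ((4 / Real.sqrt (fQ a b)) • b) := by
  rw [Psi2_eq_Psi1_swap, Psi1_eq_liftVec (by linarith), fQ_comm]

end Psi

theorem statement_7_general {n : ℕ} (a b : EuclideanSpace ℝ (Fin n))
    (hab : ‖a‖ + ‖b‖ < 2) :
    Psi1 a b ∈ Hyp n ∧ Psi2 a b ∈ Hyp n ∧
    P1 (Psi1 a b) (Psi2 a b) = a ∧ P2 (Psi1 a b) (Psi2 a b) = b := by
  have hr : Real.sqrt (fQ a b) ≠ 0 := (Real.sqrt_pos.mpr (fQ_pos hab)).ne'
  have hscale : 2 / ((4 + ‖a‖ ^ 2 - ‖b‖ ^ 2) / Real.sqrt (fQ a b)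
      + (4 + ‖b‖ ^ 2 - ‖a‖ ^ 2) / Real.sqrt (fQ a b)) * (4 / Real.sqrt (fQ a b)) = 1 := by
    field_simp
    ring
  refine ⟨liftVec_sqrt_mem_Hyp _, liftVec_sqrt_mem_Hyp _, ?_, ?_⟩ <;>
    rw [Psi1_eq_liftVec hab, Psi2_eq_liftVec hab]
  · rw [P1_liftVec, smul_smul, hscale, one_smul]
  · rw [P2_liftVec, smul_smul, hscale, one_smul]

/-- for `(a,b) ∈ Ω`, both components of `Ψ(a,b)` lie on the
hyperboloid and `Φ(Ψ(a,b)) = (a,b)`. -/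
theorem statement_7 {n : ℕ} (hn : 1 ≤ n) (a b : EuclideanSpace ℝ (Fin n))
    (hab : ‖a‖ + ‖b‖ < 2) :
    Psi1 a b ∈ Hyp n ∧ Psi2 a b ∈ Hyp n ∧
    P1 (Psi1 a b) (Psi2 a b) = a ∧ P2 (Psi1 a b) (Psi2 a b) = b :=
  statement_7_general a b hab
end
end
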